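/- arXiv:0705.2503 — 3 statements merged into one kernel-verified Lean document; each statement's English description precedes it below -/
import Mathlib

section
/- If 𝒯' ⊆ 𝒯 is a minimal r-test set of S (i.e., 𝒯' is an r-test set but no proper subfamily of 𝒯' is an r-test set), then |𝒯'| ≤ r·(n − 1). -/
open Finset

/-- The set of item pairs: 2-element subsets of the item set `S` (here the whole type `α`). -/
def itemPairs (α : Type*) [Fintype α] [DecidableEq α] : Finset (Finset α) :=
  Finset.univ.filter fun a => a.card = 2

/-- `⊥(a, F)`: the number of tests in the family `F` that differentiate the item pair `a`,
i.e. the tests `T` with `|T ∩ a| = 1`. -/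
def diffBy {α : Type*} [DecidableEq α] (a : Finset α) (F : Finset (Finset α)) : ℕ :=
  (F.filter fun T => (T ∩ a).card = 1).card

/-- `F` is an `r`-test set for the collection `𝒯`: `F ⊆ 𝒯` and every item pair is
differentiated by at least `r` tests of `F`. -/
def IsRTestSet {α : Type*} [Fintype α] [DecidableEq α]
    (r : ℕ) (𝒯 F : Finset (Finset α)) : Prop :=
  F ⊆ 𝒯 ∧ ∀ a ∈ itemPairs α, r ≤ diffBy a F

/-- The differentiation measure `#(T̄) = ∑_a max (r - ⊥(a,T̄), 0)` (truncated subtraction). -/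
def dmeasure {α : Type*} [Fintype α] [DecidableEq α]
    (r : ℕ) (F : Finset (Finset α)) : ℕ :=
  ∑ a ∈ itemPairs α, (r - diffBy a F)

/-- A run of the set cover greedy algorithm SGA: a sequence of distinct tests from `𝒯`,
each chosen greedily to minimize the differentiation measure of the selected family,
selections continue while the measure is positive, and the final measure is `0`. -/
structure SGARun {α : Type*} [Fintype α] [DecidableEq α]
    (r : ℕ) (𝒯 : Finset (Finset α)) (L : List (Finset α)) : Prop where
  nodup : L.Nodup
  mem : ∀ T ∈ L, T ∈ 𝒯
  greedy : ∀ i : Fin L.length, ∀ T ∈ 𝒯, T ∉ (L.take i).toFinset →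
      dmeasure r (insert (L.get i) (L.take i).toFinset) ≤
        dmeasure r (insert T (L.take i).toFinset)
  pos : ∀ i < L.length, 0 < dmeasure r (L.take i).toFinset
  done : dmeasure r L.toFinset = 0


/-!
Induct on `r`. A minimal `(r+1)`-test set `F` contains a minimal `r`-test set `F''`, of size at
most `r(n-1)` by induction. Removing any `T ∈ F` destroys the `(r+1)`-test property, so some pair
`a` is differentiated by exactly `r+1` tests of `F`, one of them `T`; as `F''` already
differentiates `a` at least `r` times, `T` is the only test of `G = F \ F''` differentiating `a`.
Such private pairs force `|G| ≤ n - 1`: over `ZMod 2`, the indicator vectors of the private pairs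
lie in the hyperplane `∑ xᵢ = 0`, and they are linearly independent because the form
`x ↦ ∑_{i ∈ T} xᵢ` is `1` on the private pair of `T` and `0` on every other one.
-/

open Finset Module

section TestSets

variable {α : Type*} [Fintype α] [DecidableEq α]

lemma mem_itemPairs {a : Finset α} : a ∈ itemPairs α ↔ a.card = 2 := by
  simp [itemPairs]

omit [Fintype α] in
lemma diffBy_add_diffBy_sdiff (a : Finset α) {F'' F : Finset (Finset α)} (h : F'' ⊆ F) :
    diffBy a F'' + diffBy a (F \ F'') = diffBy a F := by
  unfold diffBy
  rw [← card_union_of_disjoint (disjoint_filter_filter disjoint_sdiff), ← filter_union,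
    union_sdiff_of_subset h]

omit [Fintype α] in
lemma diffBy_erase (a T : Finset α) (F : Finset (Finset α)) :
    diffBy a (F.erase T) =
      if T ∈ F ∧ (T ∩ a).card = 1 then diffBy a F - 1 else diffBy a F := by
  simp only [diffBy, filter_erase, card_erase_eq_ite, mem_filter]

lemma IsRTestSet.of_le {r s : ℕ} {𝒯 F : Finset (Finset α)} (hF : IsRTestSet r 𝒯 F)
    (hsr : s ≤ r) : IsRTestSet s 𝒯 F :=
  ⟨hF.1, fun a ha => hsr.trans (hF.2 a ha)⟩

lemma Minimal.exists_pair_diffBy_eq {r : ℕ} {𝒯 F : Finset (Finset α)}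
    (hF : Minimal (IsRTestSet r 𝒯) F) {T : Finset α} (hT : T ∈ F) :
    ∃ a ∈ itemPairs α, (T ∩ a).card = 1 ∧ diffBy a F = r := by
  obtain ⟨a, ha, hlt⟩ : ∃ a ∈ itemPairs α, diffBy a (F.erase T) < r := by
    by_contra! h
    exact hF.not_prop_of_lt (erase_ssubset hT) ⟨(erase_subset T F).trans hF.prop.1, h⟩
  have hge := hF.prop.2 a ha
  rw [diffBy_erase] at hlt
  split_ifs at hlt with hTa
  · exact ⟨a, ha, hTa.2, by omega⟩
  · omega

lemma Minimal.exists_private_pair {r : ℕ} {𝒯 F F'' : Finset (Finset α)}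
    (hF : Minimal (IsRTestSet (r + 1) 𝒯) F) (hF'' : IsRTestSet r 𝒯 F'') (hsub : F'' ⊆ F)
    {T : Finset α} (hT : T ∈ F \ F'') :
    ∃ a : Finset α, a.card = 2 ∧ ∀ T' ∈ F \ F'', (T' ∩ a).card = 1 ↔ T' = T := by
  obtain ⟨a, ha, hTa, hFa⟩ := hF.exists_pair_diffBy_eq (mem_sdiff.1 hT).1
  have hG : diffBy a (F \ F'') ≤ 1 := by
    have := diffBy_add_diffBy_sdiff a hsub
    have := hF''.2 a ha
    omega
  refine ⟨a, mem_itemPairs.1 ha, fun T' hT' => ⟨fun hT'a => ?_, fun h => h ▸ hTa⟩⟩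
  exact card_le_one.1 hG T' (mem_filter.2 ⟨hT', hT'a⟩) T (mem_filter.2 ⟨hT, hTa⟩)

omit [Fintype α] in
lemma natCast_card_inter_of_card_eq_two {a : Finset α} (T : Finset α) (ha : a.card = 2) :
    ((T ∩ a).card : ZMod 2) = if (T ∩ a).card = 1 then 1 else 0 := by
  have hle : (T ∩ a).card ≤ 2 := ha ▸ card_le_card inter_subset_right
  interval_cases (T ∩ a).card <;> decide

def sumOn (R : Type*) [CommSemiring R] (T : Finset α) : Dual R (α → R) :=
  ∑ i ∈ T, LinearMap.proj i

omit [Fintype α] in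
lemma sumOn_apply_indicator {R : Type*} [CommSemiring R] (T a : Finset α) :
    sumOn R T (fun i => if i ∈ a then 1 else 0) = (T ∩ a).card := by
  simp [sumOn, LinearMap.sum_apply]

lemma finrank_ker_sumOn_univ_le :
    finrank (ZMod 2) (LinearMap.ker (sumOn (ZMod 2) (univ : Finset α))) ≤
      Fintype.card α - 1 := by
  rcases isEmpty_or_nonempty α with hα | ⟨⟨i₀⟩⟩
  · simpa using Submodule.finrank_le (LinearMap.ker (sumOn (ZMod 2) (univ : Finset α)))
  · have hne : LinearMap.ker (sumOn (ZMod 2) (univ : Finset α)) ≠ ⊤ := by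
      intro h
      have := LinearMap.mem_ker.1 (h ▸ Submodule.mem_top : Pi.single i₀ 1 ∈ _)
      simp [sumOn, LinearMap.sum_apply] at this
    have := Submodule.finrank_lt hne
    rw [finrank_fintype_fun_eq_card] at this
    omega

theorem card_le_of_private_pairs (G : Finset (Finset α)) (w : Finset α → Finset α)
    (hw : ∀ T ∈ G, (w T).card = 2)
    (hpriv : ∀ T ∈ G, ∀ T' ∈ G, (T' ∩ w T).card = 1 ↔ T' = T) :
    G.card ≤ Fintype.card α - 1 := by
  let v : G → α → ZMod 2 := fun T i => if i ∈ w T then 1 else 0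
  have hsumOn_v (T T' : G) : sumOn (ZMod 2) T (v T') = if T = T' then 1 else 0 := by
    rw [sumOn_apply_indicator, natCast_card_inter_of_card_eq_two T (hw T' T'.2)]
    simp only [hpriv T' T'.2 T T.2, Subtype.coe_inj]
  have hli : LinearIndependent (ZMod 2) v :=
    .of_pairwise_dual_eq_zero_one v (fun T => sumOn (ZMod 2) T)
      (fun T T' hne => by simp [hsumOn_v, hne]) (fun T => by simp [hsumOn_v])
  have hspan : Submodule.span (ZMod 2) (Set.range v) ≤ LinearMap.ker (sumOn (ZMod 2) univ) := by
    rw [Submodule.span_le]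
    rintro _ ⟨T, rfl⟩
    rw [SetLike.mem_coe, LinearMap.mem_ker, sumOn_apply_indicator, univ_inter, hw T T.2]
    rfl
  calc G.card = finrank (ZMod 2) (Submodule.span (ZMod 2) (Set.range v)) := by
        rw [finrank_span_eq_card hli, Fintype.card_coe]
    _ ≤ finrank (ZMod 2) (LinearMap.ker (sumOn (ZMod 2) univ)) := Submodule.finrank_mono hspan
    _ ≤ Fintype.card α - 1 := finrank_ker_sumOn_univ_le

theorem Minimal.card_le_of_isRTestSet {r : ℕ} {𝒯 F : Finset (Finset α)}
    (hF : Minimal (IsRTestSet r 𝒯) F) :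
    F.card ≤ r * (Fintype.card α - 1) := by
  induction r generalizing F with
  | zero =>
    have hempty : IsRTestSet 0 𝒯 ∅ := ⟨empty_subset 𝒯, fun _ _ => Nat.zero_le _⟩
    simp [subset_empty.1 (hF.2 hempty (empty_subset F))]
  | succ r ih =>
    obtain ⟨F'', hsub, hF''⟩ :=
      exists_minimal_le_of_wellFoundedLT (IsRTestSet r 𝒯) F (hF.prop.of_le r.le_succ)
    choose! w hw hpriv using fun T hT => hF.exists_private_pair hF''.prop hsub (T := T) hT
    calc F.card = F''.card + (F \ F'').card := by
          rw [← card_sdiff_add_card_eq_card hsub, add_comm]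
      _ ≤ r * (Fintype.card α - 1) + (Fintype.card α - 1) :=
        add_le_add (ih hF'') (card_le_of_private_pairs _ w hw hpriv)
      _ = (r + 1) * (Fintype.card α - 1) := by ring

end TestSets

theorem stmt_1_general {α : Type*} [Fintype α] [DecidableEq α]
    (r : ℕ)
    (𝒯 F : Finset (Finset α)) (hF : IsRTestSet r 𝒯 F)
    (hmin : ∀ F' ⊂ F, ¬ IsRTestSet r 𝒯 F') :
    F.card ≤ r * (Fintype.card α - 1) :=
  (minimal_iff_forall_lt.2 ⟨hF, hmin⟩).card_le_of_isRTestSet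

/-- a minimal `r`-test set has at most `r·(n−1)` tests. -/
theorem stmt_1 {α : Type*} [Fintype α] [DecidableEq α]
    (r : ℕ) (hr : 1 ≤ r) (hn : 2 ≤ Fintype.card α)
    (𝒯 F : Finset (Finset α)) (hF : IsRTestSet r 𝒯 F)
    (hmin : ∀ F' ⊂ F, ¬ IsRTestSet r 𝒯 F') :
    F.card ≤ r * (Fintype.card α - 1) :=
  stmt_1_general r 𝒯 F hF hmin
end

section
/- Let 𝒯* ⊆ 𝒯 be an optimal r-test set (an r-test set of minimum cardinality) and let m* = |𝒯*|. Then the number of item pairs a with ⊥(a,𝒯*) = r (i.e., pairs differentiated by exactly r tests of 𝒯*) is at most 2·n·log₂(n)·(m*)^{r−1}. -/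
/-!
Code each item by the set of tests of `𝒯*` containing it, a point of the hypercube. For any
`r - 1` tests `R ⊆ 𝒯*`, every pair is still differentiated by a test of `𝒯* \ R`, so the codes
restricted to `𝒯* \ R` are `n` distinct points, and a pair differentiated by exactly `r` tests,
`R` among them, becomes an edge of the subcube they span. Splitting along a coordinate gives the
edge-isoperimetric bound `2 |A| log₂ |A|` on ordered adjacent pairs in a set `A` of vertices, so
each `R` accounts for at most `2 n log₂ n` pairs, while each pair is counted for `r` of the
`C(m*, r - 1) ≤ (m*)^(r-1)` choices of `R`.
-/

open Finset

open Real

section Hypercube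

variable {β : Type*} [Fintype β]

def adjacentPairs (A : Finset (β → Bool)) : Finset ((β → Bool) × (β → Bool)) :=
  {p ∈ A ×ˢ A | hammingDist p.1 p.2 = 1}

lemma apply_eq_of_hammingDist_eq_one {ι : Type*} [Fintype ι] {γ : ι → Type*}
    [∀ i, DecidableEq (γ i)] {u w : ∀ i, γ i} {c d : ι} (h : hammingDist u w = 1)
    (hc : u c ≠ w c) (hd : d ≠ c) : u d = w d := by
  obtain ⟨x, hx⟩ := card_eq_one.mp h
  have hcx : c ∈ ({i | u i ≠ w i} : Finset ι) := by simpa using hc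
  by_contra hne
  have hdx : d ∈ ({i | u i ≠ w i} : Finset ι) := by simpa using hne
  rw [hx, mem_singleton] at hcx hdx
  exact hd (hdx.trans hcx.symm)

lemma eq_of_hammingDist_eq_one_of_apply_ne {u w w' : β → Bool} {c : β}
    (hw : hammingDist u w = 1) (hw' : hammingDist u w' = 1) (hc : u c ≠ w c)
    (hc' : u c ≠ w' c) : w = w' := by
  funext d
  by_cases hd : d = c
  · subst hd
    revert hc hc'
    cases u d <;> cases w d <;> cases w' d <;> decide
  · rw [← apply_eq_of_hammingDist_eq_one hw hc hd, apply_eq_of_hammingDist_eq_one hw' hc' hd]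

lemma filter_adjacentPairs_apply_eq (A : Finset (β → Bool)) (c : β) (b : Bool) :
    {p ∈ adjacentPairs A | p.1 c = b ∧ p.2 c = b} = adjacentPairs {v ∈ A | v c = b} := by
  ext p
  simp only [adjacentPairs, mem_filter, mem_product]
  tauto

lemma card_filter_adjacentPairs_apply_ne_le (A : Finset (β → Bool)) (c : β) {b b' : Bool}
    (hb : b ≠ b') :
    #{p ∈ adjacentPairs A | p.1 c = b ∧ p.2 c = b'} ≤
      min #{v ∈ A | v c = b} #{v ∈ A | v c = b'} := by
  simp only [adjacentPairs, filter_filter]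
  refine le_min (card_le_card_of_injOn Prod.fst ?_ ?_) (card_le_card_of_injOn Prod.snd ?_ ?_)
  · intro p hp
    simp only [coe_filter, mem_product, Set.mem_ofPred_eq] at hp ⊢
    exact ⟨hp.1.1, hp.2.2.1⟩
  · intro p hp q hq hpq
    simp only [coe_filter, mem_product, Set.mem_ofPred_eq] at hp hq
    refine Prod.ext hpq (eq_of_hammingDist_eq_one_of_apply_ne (c := c) hp.2.1 (hpq ▸ hq.2.1) ?_ ?_)
    · rw [hp.2.2.1, hp.2.2.2]; exact hb
    · rw [hpq, hq.2.2.1, hq.2.2.2]; exact hb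
  · intro p hp
    simp only [coe_filter, mem_product, Set.mem_ofPred_eq] at hp ⊢
    exact ⟨hp.1.2, hp.2.2.2⟩
  · intro p hp q hq hpq
    simp only [coe_filter, mem_product, Set.mem_ofPred_eq] at hp hq
    rw [hammingDist_comm] at hp hq
    refine Prod.ext (eq_of_hammingDist_eq_one_of_apply_ne (c := c) hp.2.1 (hpq ▸ hq.2.1) ?_ ?_) hpq
    · rw [hp.2.2.1, hp.2.2.2]; exact hb.symm
    · rw [hpq, hq.2.2.1, hq.2.2.2]; exact hb.symm

lemma card_adjacentPairs_le_of_split (A : Finset (β → Bool)) (c : β) :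
    #(adjacentPairs A) ≤ #(adjacentPairs {v ∈ A | v c = false}) +
      #(adjacentPairs {v ∈ A | v c = true}) +
        2 * min #{v ∈ A | v c = false} #{v ∈ A | v c = true} := by
  rw [card_eq_sum_card_fiberwise (f := fun p => (p.1 c, p.2 c)) (t := univ)
    (fun _ _ => mem_coe.2 (mem_univ _))]
  simp only [Fintype.sum_prod_type, Fintype.sum_bool, Prod.mk.injEq,
    filter_adjacentPairs_apply_eq]
  have hft := card_filter_adjacentPairs_apply_ne_le A c (b := false) (b' := true) (by decide)
  have htf := card_filter_adjacentPairs_apply_ne_le A c (b := true) (b' := false) (by decide)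
  rw [min_comm] at htf
  omega

lemma mul_logb_add_mul_logb_add_min_le {a b : ℝ} (ha : 0 < a) (hb : 0 < b) :
    a * logb 2 a + b * logb 2 b + min a b ≤ (a + b) * logb 2 (a + b) := by
  wlog hab : a ≤ b generalizing a b
  · simpa [min_comm, add_comm] using this hb ha (le_of_not_ge hab)
  rw [min_eq_left hab]
  have hdouble : a * logb 2 a + a = a * logb 2 (2 * a) := by
    rw [logb_mul two_ne_zero ha.ne', logb_self_eq_one one_lt_two]
    ring
  have h2a : a * logb 2 (2 * a) ≤ a * logb 2 (a + b) :=
    mul_le_mul_of_nonneg_left (logb_le_logb_of_le one_lt_two (by positivity) (by linarith))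
      ha.le
  have hb' : b * logb 2 b ≤ b * logb 2 (a + b) :=
    mul_le_mul_of_nonneg_left (logb_le_logb_of_le one_lt_two hb (by linarith)) hb.le
  linarith

lemma logb_two_natCast_nonneg (n : ℕ) : 0 ≤ logb 2 n :=
  div_nonneg (log_natCast_nonneg n) (log_nonneg one_le_two)

theorem card_adjacentPairs_le (A : Finset (β → Bool)) :
    (#(adjacentPairs A) : ℝ) ≤ 2 * #A * logb 2 #A := by
  induction A using Finset.strongInduction with
  | H A ih =>
  by_cases hA : #A ≤ 1
  · have hempty : adjacentPairs A = ∅ := by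
      refine filter_eq_empty_iff.mpr fun p hp => ?_
      rw [mem_product] at hp
      rw [card_le_one.mp hA _ hp.1 _ hp.2, hammingDist_self]
      exact zero_ne_one
    rw [hempty, card_empty, Nat.cast_zero]
    have := logb_two_natCast_nonneg #A
    positivity
  obtain ⟨u, hu, w, hw, huw⟩ := one_lt_card.mp (not_le.mp hA)
  obtain ⟨c, hc⟩ := Function.ne_iff.mp huw
  set A₀ := {v ∈ A | v c = false}
  set A₁ := {v ∈ A | v c = true}
  have hne : A₀.Nonempty ∧ A₁.Nonempty := by
    cases hu' : u c <;> cases hw' : w c <;> simp only [hu', hw', ne_eq, not_true] at hc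
    · exact ⟨⟨u, mem_filter.mpr ⟨hu, hu'⟩⟩, ⟨w, mem_filter.mpr ⟨hw, hw'⟩⟩⟩
    · exact ⟨⟨w, mem_filter.mpr ⟨hw, hw'⟩⟩, ⟨u, mem_filter.mpr ⟨hu, hu'⟩⟩⟩
  obtain ⟨⟨u₀, hu₀⟩, ⟨u₁, hu₁⟩⟩ := hne
  have hA₀ : A₀ ⊂ A := by
    refine filter_ssubset.mpr ⟨u₁, (mem_filter.mp hu₁).1, ?_⟩
    simp [(mem_filter.mp hu₁).2]
  have hA₁ : A₁ ⊂ A := by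
    refine filter_ssubset.mpr ⟨u₀, (mem_filter.mp hu₀).1, ?_⟩
    simp [(mem_filter.mp hu₀).2]
  have hcard : #A₀ + #A₁ = #A := by
    rw [← card_filter_add_card_filter_not (fun v : β → Bool => v c = false) (s := A)]
    simp [A₀, A₁]
  have hsplit : (#(adjacentPairs A) : ℝ) ≤ #(adjacentPairs A₀) + #(adjacentPairs A₁) +
      2 * min (#A₀ : ℝ) #A₁ := by
    exact_mod_cast card_adjacentPairs_le_of_split A c
  have hlog := mul_logb_add_mul_logb_add_min_le (a := #A₀) (b := #A₁)
    (by exact_mod_cast card_pos.mpr ⟨u₀, hu₀⟩) (by exact_mod_cast card_pos.mpr ⟨u₁, hu₁⟩)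
  rw [← hcard, Nat.cast_add]
  linarith [ih A₀ hA₀, ih A₁ hA₁]

end Hypercube

section Items

variable {α : Type*} [DecidableEq α]

def diffTests (a : Finset α) (F : Finset (Finset α)) : Finset (Finset α) :=
  F.filter fun T => (T ∩ a).card = 1

lemma card_diffTests (a : Finset α) (F : Finset (Finset α)) :
    #(diffTests a F) = diffBy a F := rfl

lemma diffTests_sdiff (a : Finset α) (F R : Finset (Finset α)) :
    diffTests a (F \ R) = diffTests a F \ R := by
  ext T
  simp only [diffTests, mem_filter, mem_sdiff]
  tauto

lemma diffBy_sdiff_of_subset {a : Finset α} {F R : Finset (Finset α)} (h : R ⊆ diffTests a F) :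
    diffBy a (F \ R) = diffBy a F - #R := by
  rw [← card_diffTests, diffTests_sdiff, card_sdiff_of_subset h, card_diffTests]

lemma diffBy_sub_card_le_diffBy_sdiff (a : Finset α) (F R : Finset (Finset α)) :
    diffBy a F - #R ≤ diffBy a (F \ R) := by
  rw [← card_diffTests, ← card_diffTests, diffTests_sdiff]
  exact le_card_sdiff R _

lemma card_inter_pair_eq_one_iff {i j : α} (hij : i ≠ j) (T : Finset α) :
    (T ∩ {i, j}).card = 1 ↔ (i ∈ T ↔ j ∉ T) := by
  by_cases hi : i ∈ T <;> by_cases hj : j ∈ T <;>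
    simp [inter_insert_of_mem, inter_insert_of_notMem, inter_singleton_of_mem,
      inter_singleton_of_notMem, hi, hj, hij]

variable [Fintype α]

def membershipVector (F : Finset (Finset α)) (i : α) : Finset α → Bool :=
  fun T => decide (T ∈ F ∧ i ∈ T)

lemma hammingDist_membershipVector (F : Finset (Finset α)) {i j : α} (hij : i ≠ j) :
    hammingDist (membershipVector F i) (membershipVector F j) = diffBy {i, j} F := by
  rw [hammingDist, diffBy]
  congr 1
  ext T
  simp only [membershipVector, mem_filter, mem_univ, true_and, ne_eq, decide_eq_decide,
    card_inter_pair_eq_one_iff hij]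
  tauto

end Items

section Counting

variable {α : Type*} [Fintype α] [DecidableEq α]

theorem card_pairs_diffBy_eq_one_le (G : Finset (Finset α))
    (hG : ∀ i j : α, i ≠ j → diffBy {i, j} G ≠ 0) :
    (#{p : α × α | p.1 ≠ p.2 ∧ diffBy {p.1, p.2} G = 1} : ℝ) ≤
      2 * Fintype.card α * logb 2 (Fintype.card α) := by
  set v := membershipVector G
  have hv : Function.Injective v := by
    intro i j hij
    by_contra hne
    exact hG i j hne ((hammingDist_membershipVector G hne).symm.trans (hammingDist_eq_zero.mpr hij))
  have hpairs : #{p : α × α | p.1 ≠ p.2 ∧ diffBy {p.1, p.2} G = 1} ≤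
      #(adjacentPairs (univ.image v)) := by
    refine card_le_card_of_injOn (fun p => (v p.1, v p.2)) (fun p hp => ?_) (fun p _ q _ h => ?_)
    · simp only [coe_filter, mem_univ, true_and, Set.mem_ofPred_eq] at hp
      simp only [adjacentPairs, coe_filter, mem_product, mem_image_of_mem, mem_univ,
        Set.mem_ofPred_eq, true_and]
      rw [hammingDist_membershipVector G hp.1, hp.2]
    · simp only [Prod.mk.injEq] at h
      exact Prod.ext (hv h.1) (hv h.2)
  calc (#{p : α × α | p.1 ≠ p.2 ∧ diffBy {p.1, p.2} G = 1} : ℝ)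
      ≤ #(adjacentPairs (univ.image v)) := by exact_mod_cast hpairs
    _ ≤ 2 * #(univ.image v) * logb 2 #(univ.image v) := card_adjacentPairs_le _
    _ = 2 * Fintype.card α * logb 2 (Fintype.card α) := by
      rw [card_image_of_injective _ hv, card_univ]

lemma card_filter_itemPairs_le (P : Finset α → Prop) [DecidablePred P] :
    #{a ∈ itemPairs α | P a} ≤ #{p : α × α | p.1 ≠ p.2 ∧ P {p.1, p.2}} := by
  refine card_le_card_of_surjOn (fun p => {p.1, p.2}) fun a ha => ?_
  simp only [itemPairs, coe_filter, mem_filter, mem_univ, true_and, Set.mem_ofPred_eq] at ha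
  obtain ⟨i, j, hij, rfl⟩ := card_eq_two.mp ha.1
  exact ⟨(i, j), by simpa [hij] using ha.2, rfl⟩

lemma card_powersetCard_pred_filter_subset {ι : Type*} [DecidableEq ι] {F D : Finset ι} {r : ℕ}
    (hr : 1 ≤ r) (hD : D ⊆ F) (hDr : #D = r) :
    #{R ∈ F.powersetCard (r - 1) | R ⊆ D} = r := by
  have hfilter : {R ∈ F.powersetCard (r - 1) | R ⊆ D} = D.powersetCard (r - 1) := by
    ext R
    simp only [mem_filter, mem_powersetCard]
    exact ⟨fun h => ⟨h.2, h.1.2⟩, fun h => ⟨⟨h.1.trans hD, h.2⟩, h.1⟩⟩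
  obtain ⟨k, rfl⟩ := Nat.exists_eq_add_of_le' hr
  rw [hfilter, card_powersetCard, hDr, Nat.add_sub_cancel, Nat.choose_succ_self_right]

theorem card_pairs_diffBy_eq_mul_le (F : Finset (Finset α)) {r : ℕ} (hr : 1 ≤ r)
    (hF : ∀ i j : α, i ≠ j → r ≤ diffBy {i, j} F) :
    (#{p : α × α | p.1 ≠ p.2 ∧ diffBy {p.1, p.2} F = r} : ℝ) * r ≤
      (#F).choose (r - 1) * (2 * Fintype.card α * logb 2 (Fintype.card α)) := by
  -- double count pairs `(p, R)` where `R` is an `(r - 1)`-set of tests differentiating `p`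
  have hcount := card_nsmul_le_card_nsmul (s := {p : α × α | p.1 ≠ p.2 ∧ diffBy {p.1, p.2} F = r})
    (t := F.powersetCard (r - 1)) (fun p R => R ⊆ diffTests {p.1, p.2} F)
    (m := (r : ℝ)) (n := 2 * Fintype.card α * logb 2 (Fintype.card α)) ?_ ?_
  · simpa [nsmul_eq_mul, card_powersetCard, mul_comm] using hcount
  · intro p hp
    simp only [mem_filter, mem_univ, true_and] at hp
    rw [bipartiteAbove, card_powersetCard_pred_filter_subset (D := diffTests {p.1, p.2} F) hr
      (filter_subset _ _) hp.2]
  · intro R hR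
    rw [mem_powersetCard] at hR
    have hsub : bipartiteBelow (fun p R => R ⊆ diffTests {p.1, p.2} F)
        {p : α × α | p.1 ≠ p.2 ∧ diffBy {p.1, p.2} F = r} R ⊆
          ({p : α × α | p.1 ≠ p.2 ∧ diffBy {p.1, p.2} (F \ R) = 1} : Finset (α × α)) := by
      intro p hp
      simp only [bipartiteBelow, mem_filter, mem_univ, true_and] at hp ⊢
      rw [diffBy_sdiff_of_subset hp.2, hp.1.2, hR.2]
      exact ⟨hp.1.1, by omega⟩
    refine le_trans (by exact_mod_cast card_le_card hsub) (card_pairs_diffBy_eq_one_le (F \ R) ?_)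
    intro i j hij
    have := diffBy_sub_card_le_diffBy_sdiff {i, j} F R
    have := hF i j hij
    omega

end Counting

lemma IsRTestSet.le_diffBy_pair {α : Type*} [Fintype α] [DecidableEq α] {r : ℕ}
    {𝒯 F : Finset (Finset α)} (hF : IsRTestSet r 𝒯 F) {i j : α} (hij : i ≠ j) :
    r ≤ diffBy {i, j} F :=
  hF.2 {i, j} (mem_filter.mpr ⟨mem_univ _, card_pair hij⟩)

theorem stmt_2_general {α : Type*} [Fintype α] [DecidableEq α]
    (r : ℕ) (hr : 1 ≤ r)
    (𝒯 : Finset (Finset α))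
    (Fstar : Finset (Finset α)) (hFstar : IsRTestSet r 𝒯 Fstar) :
    ((((itemPairs α).filter fun a => diffBy a Fstar = r).card : ℝ)) ≤
      2 * (Fintype.card α : ℝ) * Real.logb 2 (Fintype.card α) *
        (Fstar.card : ℝ) ^ (r - 1) := by
  set n := Fintype.card α
  set Q : Finset (α × α) := {p | p.1 ≠ p.2 ∧ diffBy {p.1, p.2} Fstar = r}
  have hPQ : (((itemPairs α).filter fun a => diffBy a Fstar = r).card : ℝ) ≤ #Q := by
    exact_mod_cast card_filter_itemPairs_le _
  have hQ : (#Q : ℝ) * r ≤ (#Fstar).choose (r - 1) * (2 * n * logb 2 n) :=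
    card_pairs_diffBy_eq_mul_le Fstar hr fun i j => hFstar.le_diffBy_pair
  have hchoose : ((#Fstar).choose (r - 1) : ℝ) ≤ (#Fstar : ℝ) ^ (r - 1) := by
    exact_mod_cast Nat.choose_le_pow _ _
  have hlog := logb_two_natCast_nonneg n
  calc (((itemPairs α).filter fun a => diffBy a Fstar = r).card : ℝ)
      ≤ #Q * r := hPQ.trans (le_mul_of_one_le_right (by positivity) (by exact_mod_cast hr))
    _ ≤ (#Fstar).choose (r - 1) * (2 * n * logb 2 n) := hQ
    _ ≤ (#Fstar : ℝ) ^ (r - 1) * (2 * n * logb 2 n) := by gcongr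
    _ = 2 * n * logb 2 n * (#Fstar : ℝ) ^ (r - 1) := mul_comm _ _

/-- for an optimal `r`-test set `𝒯*` of size `m*`, at most
`2·n·log₂ n·(m*)^(r−1)` item pairs are differentiated by exactly `r` tests of `𝒯*`. -/
theorem stmt_2 {α : Type*} [Fintype α] [DecidableEq α]
    (r : ℕ) (hr : 1 ≤ r) (hn : 2 ≤ Fintype.card α)
    (𝒯 : Finset (Finset α))
    (hcompl : ∀ T₁ ∈ 𝒯, ∀ T₂ ∈ 𝒯, T₁ ≠ Finset.univ \ T₂)
    (Fstar : Finset (Finset α)) (hFstar : IsRTestSet r 𝒯 Fstar)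
    (hopt : ∀ F : Finset (Finset α), IsRTestSet r 𝒯 F → Fstar.card ≤ F.card) :
    ((((itemPairs α).filter fun a => diffBy a Fstar = r).card : ℝ)) ≤
      2 * (Fintype.card α : ℝ) * Real.logb 2 (Fintype.card α) *
        (Fstar.card : ℝ) ^ (r - 1) :=
  stmt_2_general r hr 𝒯 Fstar hFstar
end

section
/- Let 𝒯* ⊆ 𝒯 be an optimal r-test set with m* = |𝒯*| ≥ 2, and let #_B ≥ 1 be the number of item pairs differentiated by exactly r tests of 𝒯*. Then any run of SGA returns an r-test set of size at most (ln #₀ − (1/(r+1))·ln(#₀/#_B) + (r/(r+1))·ln(r+1) + 1)·m* + 1. -/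
/-!
Let `Dᵢ` be the differentiation measure after `i` greedy steps. Every item pair still in deficit
is differentiated by enough of the unused tests of `𝒯*`, so the greedy gain `Dᵢ - Dᵢ₊₁` is at
least `Dᵢ / m*`; moreover a pair can fall short of gaining `r + 1` only if `𝒯*` differentiates it
exactly `r` times, which gives `(r + 1) Dᵢ ≤ r m* (Dᵢ - Dᵢ₊₁) + r #_B`. Hence while `Dᵢ > #_B`
the excess `(r + 1) Dᵢ - r #_B` decays geometrically with ratio `1 - (r + 1) / (r m*)`, and
afterwards `Dᵢ` decays with ratio `1 - 1 / m*`. Bounding `1 - x ≤ exp (-x)` turns the two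
phases into the two logarithmic terms of the bound.
-/

open Finset

lemma natCast_le_mul_log_of_geom_decay {a y X : ℝ} {x : ℕ → ℝ} {j : ℕ} (ha : 1 ≤ a) (hy : 0 < y)
    (hstep : ∀ i < j, x (i + 1) ≤ (1 - a⁻¹) * x i) (hx0 : x 0 ≤ X) (hxj : y ≤ x j) :
    (j : ℝ) ≤ a * Real.log (X / y) := by
  have hq : 0 ≤ 1 - a⁻¹ := sub_nonneg.2 (inv_le_one_of_one_le₀ ha)
  have hgeom : y ≤ (1 - a⁻¹) ^ j * x 0 := hxj.trans (le_geom hq j hstep)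
  have hx0pos : 0 < x 0 := pos_of_mul_pos_right (hy.trans_le hgeom) (pow_nonneg hq j)
  have hexp : (1 - a⁻¹) ^ j ≤ (Real.exp (j / a))⁻¹ :=
    calc (1 - a⁻¹) ^ j ≤ Real.exp (-a⁻¹) ^ j :=
          pow_le_pow_left₀ hq (Real.one_sub_le_exp_neg _) j
      _ = (Real.exp (j / a))⁻¹ := by rw [← Real.exp_nat_mul, ← Real.exp_neg]; ring_nf
  have hyX : y ≤ X / Real.exp (j / a) :=
    calc y ≤ (1 - a⁻¹) ^ j * x 0 := hgeom
      _ ≤ (Real.exp (j / a))⁻¹ * X := mul_le_mul hexp hx0 hx0pos.le (by positivity)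
      _ = X / Real.exp (j / a) := inv_mul_eq_div _ _
  have hja : (j : ℝ) / a ≤ Real.log (X / y) := by
    rw [Real.le_log_iff_exp_le (div_pos (hx0pos.trans_le hx0) hy), le_div_iff₀ hy, mul_comm,
      ← le_div_iff₀ (Real.exp_pos _)]
    exact hyX
  exact (div_le_iff₀' (by linarith)).1 hja

section GainBounds

variable {r m B : ℝ} {D : ℕ → ℝ}

lemma natCast_le_of_excess_decay (hr : 0 < r) (hrm : r + 1 ≤ r * m) (hB : 0 < B) {j : ℕ}
    (hgain : ∀ i < j, (r + 1) * D i ≤ r * m * (D i - D (i + 1)) + r * B) (hj : B < D j) :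
    (j : ℝ) ≤ r * m / (r + 1) * Real.log ((r + 1) * D 0 / B) := by
  have hrm0 : 0 < r * m := by linarith
  refine natCast_le_mul_log_of_geom_decay (x := fun i => (r + 1) * D i - r * B)
    ((one_le_div (by linarith)).2 hrm) hB (fun i hi => ?_) (by nlinarith) (by nlinarith)
  have hdrop : (r + 1) / (r * m) * ((r + 1) * D i - r * B) ≤ (r + 1) * (D i - D (i + 1)) := by
    rw [div_mul_eq_mul_div, div_le_iff₀ hrm0]
    nlinarith [hgain i hi]
  rw [inv_div, sub_mul, one_mul]
  linarith

lemma natCast_le_mul_log_of_decay (hm : 1 ≤ m) {t : ℕ}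
    (hgain : ∀ i < t, D i ≤ m * (D i - D (i + 1))) (hD0 : D 0 ≤ B) (ht : 1 ≤ D t) :
    (t : ℝ) ≤ m * Real.log B := by
  refine div_one B ▸ natCast_le_mul_log_of_geom_decay hm one_pos (fun i hi => ?_) hD0 ht
  have hdrop : m⁻¹ * D i ≤ D i - D (i + 1) := (inv_mul_le_iff₀ (by linarith)).2 (hgain i hi)
  rw [sub_mul, one_mul]
  linarith

lemma natCast_le_of_gain_bounds (hr : 0 < r) (hrm : r + 1 ≤ r * m) (hB : 1 ≤ B) (hBD0 : B ≤ D 0)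
    {n : ℕ} (hpos : ∀ i < n, 1 ≤ D i) (hDn : D n = 0)
    (hgain : ∀ i < n, D i ≤ m * (D i - D (i + 1)))
    (hgainB : ∀ i < n, (r + 1) * D i ≤ r * m * (D i - D (i + 1)) + r * B) :
    (n : ℝ) ≤ r * m / (r + 1) * Real.log ((r + 1) * D 0 / B) + m * Real.log B + 2 := by
  have hm : 1 ≤ m := by nlinarith
  have hex : ∃ i, D i ≤ B := ⟨n, by linarith⟩
  set k := Nat.find hex
  have hkn : k ≤ n := Nat.find_min' hex (by linarith)
  have hphase1 : (k : ℝ) ≤ r * m / (r + 1) * Real.log ((r + 1) * D 0 / B) + 1 := by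
    rcases Nat.eq_zero_or_pos k with hk | hk
    · have hlog : 0 ≤ Real.log ((r + 1) * D 0 / B) :=
        Real.log_nonneg ((one_le_div (by linarith)).2 (by nlinarith))
      rw [hk, Nat.cast_zero]
      nlinarith [div_nonneg (by positivity : 0 ≤ r * m) (by linarith : 0 ≤ r + 1)]
    · have := natCast_le_of_excess_decay hr hrm (by linarith) (j := k - 1)
        (fun i hi => hgainB i (by omega)) (lt_of_not_ge (Nat.find_min hex (by omega)))
      rw [Nat.cast_pred hk] at this
      linarith
  have hphase2 : (n : ℝ) ≤ k + m * Real.log B + 1 := by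
    rcases hkn.eq_or_lt with hk | hk
    · rw [hk]
      nlinarith [Real.log_nonneg hB]
    · obtain ⟨t, rfl⟩ : ∃ t, n = k + t + 1 := ⟨n - k - 1, by omega⟩
      have := natCast_le_mul_log_of_decay (D := fun i => D (k + i)) hm
        (fun i hi => by simpa only [add_assoc] using hgain (k + i) (by omega))
        (Nat.find_spec hex) (hpos (k + t) (by omega))
      push_cast
      linarith
  linarith

end GainBounds

section Differentiation

variable {α : Type*} [DecidableEq α]

lemma diffBy_mono (a : Finset α) {F G : Finset (Finset α)} (h : F ⊆ G) :
    diffBy a F ≤ diffBy a G :=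
  card_le_card (filter_subset_filter _ h)

lemma diffBy_le_diffBy_sdiff_add (a : Finset α) (F G : Finset (Finset α)) :
    diffBy a G ≤ diffBy a (G \ F) + diffBy a F := by
  calc diffBy a G ≤ diffBy a (G \ F ∪ F) := diffBy_mono a le_sdiff_sup
    _ ≤ diffBy a (G \ F) + diffBy a F := by
      rw [diffBy, filter_union]
      exact card_union_le _ _

lemma diffBy_insert {T : Finset α} {F : Finset (Finset α)} (hT : T ∉ F) (a : Finset α) :
    diffBy a (insert T F) = diffBy a F + if (T ∩ a).card = 1 then 1 else 0 := by
  rw [diffBy, diffBy, filter_insert]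
  split_ifs with h
  · exact card_insert_of_notMem fun hc => hT (mem_of_mem_filter _ hc)
  · rfl

end Differentiation

section Measure

variable {α : Type*} [Fintype α] [DecidableEq α]

lemma dmeasure_eq_zero_iff (r : ℕ) (F : Finset (Finset α)) :
    dmeasure r F = 0 ↔ ∀ a ∈ itemPairs α, r ≤ diffBy a F := by
  simp only [dmeasure, sum_eq_zero_iff, Nat.sub_eq_zero_iff_le]

lemma card_itemPairs : #(itemPairs α) = (Fintype.card α).choose 2 := by
  rw [← card_univ, ← card_powersetCard]
  congr 1
  ext a
  simp [itemPairs, mem_powersetCard]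

lemma dmeasure_empty (r : ℕ) : dmeasure r (∅ : Finset (Finset α)) = r * #(itemPairs α) := by
  simp [dmeasure, diffBy, mul_comm]

lemma cast_dmeasure_empty (r : ℕ) :
    (dmeasure r (∅ : Finset (Finset α)) : ℝ) = r * Fintype.card α * (Fintype.card α - 1) / 2 := by
  rw [dmeasure_empty, card_itemPairs]
  push_cast [Nat.cast_choose_two]
  ring

def gain (r : ℕ) (F : Finset (Finset α)) (T : Finset α) : ℕ :=
  #{a ∈ itemPairs α | (T ∩ a).card = 1 ∧ diffBy a F < r}

lemma dmeasure_insert_add_gain (r : ℕ) {T : Finset α} {F : Finset (Finset α)} (hT : T ∉ F) :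
    dmeasure r (insert T F) + gain r F T = dmeasure r F := by
  rw [dmeasure, dmeasure, gain, card_filter, ← sum_add_distrib]
  refine sum_congr rfl fun a _ => ?_
  rw [diffBy_insert hT]
  split_ifs <;> omega

lemma sum_gain (r : ℕ) (F S : Finset (Finset α)) :
    ∑ T ∈ S, gain r F T = ∑ a ∈ itemPairs α, if diffBy a F < r then diffBy a S else 0 := by
  simp only [gain, card_filter]
  rw [sum_comm]
  refine sum_congr rfl fun a _ => ?_
  split_ifs with h
  · simp only [h, and_true]
    rw [diffBy, card_filter]
  · simp [h]

variable {r : ℕ} {F G : Finset (Finset α)}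

lemma dmeasure_le_sum_gain (hG : ∀ a ∈ itemPairs α, r ≤ diffBy a G) :
    dmeasure r F ≤ ∑ T ∈ G \ F, gain r F T := by
  rw [sum_gain, dmeasure]
  refine sum_le_sum fun a ha => ?_
  have := diffBy_le_diffBy_sdiff_add a F G
  have := hG a ha
  split_ifs <;> omega

/-- Pairs with surplus in `G` force a gain larger than their deficit; only the pairs met exactly
`r` times by `G` can fall short, by at most one per pair. -/
lemma succ_mul_dmeasure_le_sum_gain (hG : ∀ a ∈ itemPairs α, r ≤ diffBy a G) :
    (r + 1) * dmeasure r F ≤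
      r * ∑ T ∈ G \ F, gain r F T + r * #{a ∈ itemPairs α | diffBy a G = r} := by
  rw [sum_gain, card_filter, dmeasure, mul_sum, mul_sum, mul_sum, ← sum_add_distrib]
  refine sum_le_sum fun a ha => ?_
  have hsplit := diffBy_le_diffBy_sdiff_add a F G
  have hrG := hG a ha
  have hdeficit : r - diffBy a F ≤ diffBy a (G \ F) := by omega
  have hdeficit_le : r - diffBy a F ≤ r := Nat.sub_le _ _
  split_ifs with hF hGr
  · nlinarith
  · have hsurplus : r - diffBy a F + 1 ≤ diffBy a (G \ F) := by omega
    nlinarith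
  all_goals simp [Nat.sub_eq_zero_of_le (not_lt.1 hF)]

lemma exists_mem_sdiff_sum_gain_le (hG : ∀ a ∈ itemPairs α, r ≤ diffBy a G)
    (hF : 0 < dmeasure r F) :
    ∃ T ∈ G \ F, ∑ T' ∈ G \ F, gain r F T' ≤ #G * gain r F T := by
  have hne : (G \ F).Nonempty := by
    rw [sdiff_nonempty]
    intro hGF
    have := (dmeasure_eq_zero_iff r F).2 fun a ha => (hG a ha).trans (diffBy_mono a hGF)
    omega
  obtain ⟨T, hT, hmax⟩ := exists_max_image (G \ F) (gain r F) hne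
  refine ⟨T, hT, ?_⟩
  calc ∑ T' ∈ G \ F, gain r F T' ≤ #(G \ F) • gain r F T := sum_le_card_nsmul _ _ _ hmax
    _ ≤ #G * gain r F T := Nat.mul_le_mul_right _ (card_le_card sdiff_subset)

end Measure

lemma List.toFinset_take_succ {β : Type*} [DecidableEq β] {L : List β} {i : ℕ} (hi : i < L.length) :
    (L.take (i + 1)).toFinset = insert L[i] (L.take i).toFinset := by
  rw [List.take_add_one, List.getElem?_eq_getElem hi, Option.toList_some, List.toFinset_append,
    Finset.insert_eq, union_comm]
  rfl

namespace SGARun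

variable {α : Type*} [Fintype α] [DecidableEq α] {r : ℕ} {𝒯 : Finset (Finset α)}
  {L : List (Finset α)}

lemma dmeasure_take_succ_add_gain_le (hrun : SGARun r 𝒯 L) {i : ℕ} (hi : i < L.length)
    {T : Finset α} (hT : T ∈ 𝒯) (hTL : T ∉ (L.take i).toFinset) :
    dmeasure r (L.take (i + 1)).toFinset + gain r (L.take i).toFinset T ≤
      dmeasure r (L.take i).toFinset := by
  rw [List.toFinset_take_succ hi, ← dmeasure_insert_add_gain r hTL]
  exact Nat.add_le_add_right (hrun.greedy ⟨i, hi⟩ T hT hTL) _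

lemma dmeasure_drop_bounds (hrun : SGARun r 𝒯 L) {G : Finset (Finset α)} (hG : IsRTestSet r 𝒯 G)
    {i : ℕ} (hi : i < L.length) :
    (dmeasure r (L.take i).toFinset : ℝ) ≤
        #G * ((dmeasure r (L.take i).toFinset : ℝ) - dmeasure r (L.take (i + 1)).toFinset) ∧
      ((r : ℝ) + 1) * dmeasure r (L.take i).toFinset ≤
        r * #G * ((dmeasure r (L.take i).toFinset : ℝ) - dmeasure r (L.take (i + 1)).toFinset) +
          r * #{a ∈ itemPairs α | diffBy a G = r} := by
  obtain ⟨T, hT, hsum⟩ := exists_mem_sdiff_sum_gain_le hG.2 (hrun.pos i hi)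
  rw [mem_sdiff] at hT
  have hstep := hrun.dmeasure_take_succ_add_gain_le hi (hG.1 hT.1) hT.2
  have hgain : (gain r (L.take i).toFinset T : ℝ) ≤
      dmeasure r (L.take i).toFinset - dmeasure r (L.take (i + 1)).toFinset := by
    rw [le_sub_iff_add_le']
    exact_mod_cast hstep
  have h1 : (dmeasure r (L.take i).toFinset : ℝ) ≤ #G * gain r (L.take i).toFinset T := by
    exact_mod_cast (dmeasure_le_sum_gain hG.2).trans hsum
  have h2 : ((r : ℝ) + 1) * dmeasure r (L.take i).toFinset ≤
      r * (#G * gain r (L.take i).toFinset T) + r * #{a ∈ itemPairs α | diffBy a G = r} := by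
    exact_mod_cast (succ_mul_dmeasure_le_sum_gain hG.2).trans
      (Nat.add_le_add_right (Nat.mul_le_mul_left r hsum) _)
  have hscale := mul_le_mul_of_nonneg_left hgain (Nat.cast_nonneg (α := ℝ) #G)
  constructor
  · linarith
  · nlinarith [mul_le_mul_of_nonneg_left hscale (Nat.cast_nonneg (α := ℝ) r)]

end SGARun

theorem stmt_3_general {α : Type*} [Fintype α] [DecidableEq α]
    (r : ℕ) (hr : 1 ≤ r)
    (𝒯 Fstar : Finset (Finset α))
    (hFstar : IsRTestSet r 𝒯 Fstar)
    (hm : 2 ≤ Fstar.card)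
    (B : ℕ) (hBdef : B = ((itemPairs α).filter fun a => diffBy a Fstar = r).card)
    (hB : 1 ≤ B)
    (N0 : ℝ)
    (hN0 : N0 = (r : ℝ) * (Fintype.card α) * ((Fintype.card α : ℝ) - 1) / 2)
    (L : List (Finset α)) (hrun : SGARun r 𝒯 L) :
    (L.length : ℝ) ≤
      (Real.log N0 - (1 / ((r : ℝ) + 1)) * Real.log (N0 / (B : ℝ))
          + ((r : ℝ) / ((r : ℝ) + 1)) * Real.log ((r : ℝ) + 1) + 1) * (Fstar.card : ℝ)
        + 1 := by
  have hr' : (1 : ℝ) ≤ r := by exact_mod_cast hr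
  have hm' : (2 : ℝ) ≤ Fstar.card := by exact_mod_cast hm
  have hB' : (1 : ℝ) ≤ B := by exact_mod_cast hB
  have hD0 : (dmeasure r (L.take 0).toFinset : ℝ) = N0 := by
    rw [List.take_zero, List.toFinset_nil, cast_dmeasure_empty, hN0]
  have hBN0 : (B : ℝ) ≤ N0 := by
    rw [← hD0, hBdef, List.take_zero, List.toFinset_nil, dmeasure_empty]
    exact_mod_cast (card_filter_le _ _).trans (Nat.le_mul_of_pos_left _ hr)
  have hlen := natCast_le_of_gain_bounds (D := fun i => (dmeasure r (L.take i).toFinset : ℝ))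
    (n := L.length) (by linarith) (by nlinarith) hB'
    (by rwa [hD0]) (fun i hi => by exact_mod_cast hrun.pos i hi) (by simp [hrun.done])
    (fun i hi => (hrun.dmeasure_drop_bounds hFstar hi).1)
    (fun i hi => hBdef ▸ (hrun.dmeasure_drop_bounds hFstar hi).2)
  simp only [hD0] at hlen
  have hN0pos : 0 < N0 := by linarith
  have hBpos : (0 : ℝ) < B := by linarith
  rw [Real.log_div (by positivity) hBpos.ne', Real.log_mul (by positivity) hN0pos.ne'] at hlen
  rw [Real.log_div hN0pos.ne' hBpos.ne']
  have hrhs : (Real.log N0 - 1 / ((r : ℝ) + 1) * (Real.log N0 - Real.log B)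
        + (r : ℝ) / ((r : ℝ) + 1) * Real.log ((r : ℝ) + 1) + 1) * (Fstar.card : ℝ) + 1 =
      r * Fstar.card / (r + 1) * (Real.log ((r : ℝ) + 1) + Real.log N0 - Real.log B)
        + Fstar.card * Real.log B + 2 + (Fstar.card - 1) := by
    field_simp
    ring
  linarith

/-- with `𝒯*` an optimal `r`-test set of size `m* ≥ 2` and `#_B ≥ 1` the
number of pairs differentiated by exactly `r` tests of `𝒯*`, any SGA run has length at most
`(ln #₀ − (1/(r+1))·ln(#₀/#_B) + (r/(r+1))·ln(r+1) + 1)·m* + 1`. -/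
theorem stmt_3 {α : Type*} [Fintype α] [DecidableEq α]
    (r : ℕ) (hr : 1 ≤ r) (hn : 2 ≤ Fintype.card α)
    (𝒯 Fstar : Finset (Finset α))
    (hFstar : IsRTestSet r 𝒯 Fstar)
    (hopt : ∀ F : Finset (Finset α), IsRTestSet r 𝒯 F → Fstar.card ≤ F.card)
    (hm : 2 ≤ Fstar.card)
    (B : ℕ) (hBdef : B = ((itemPairs α).filter fun a => diffBy a Fstar = r).card)
    (hB : 1 ≤ B)
    (N0 : ℝ)
    (hN0 : N0 = (r : ℝ) * (Fintype.card α) * ((Fintype.card α : ℝ) - 1) / 2)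
    (L : List (Finset α)) (hrun : SGARun r 𝒯 L) :
    (L.length : ℝ) ≤
      (Real.log N0 - (1 / ((r : ℝ) + 1)) * Real.log (N0 / (B : ℝ))
          + ((r : ℝ) / ((r : ℝ) + 1)) * Real.log ((r : ℝ) + 1) + 1) * (Fstar.card : ℝ)
        + 1 :=
  stmt_3_general r hr 𝒯 Fstar hFstar hm B hBdef hB N0 hN0 L hrun
end
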